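/- Let G = (V,E) be a (2,2)-circuit with |V| ≥ 2. Then G contains a vertex of degree 3; moreover, for every vertex v of G of degree 3, the graph G − v obtained by deleting v and all edges incident to it is (2,2)-tight. -/

import Mathlib

/-! ### Multigraphs: finite vertex set `V`, finite edge set `E`; each edge `e` has
endpoints `src e` and `dst e` (loops and parallel edges are allowed). -/

structure Multigraph (V E : Type) where
  src : E → V
  dst : E → V

namespace Multigraph

variable {V E : Type}

/-- `i(X)`: the number of edges both of whose endpoints lie in `X`. -/
def iCount [Fintype E] [DecidableEq V] (G : Multigraph V E) (X : Finset V) : ℕ :=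
  (Finset.univ.filter fun e => G.src e ∈ X ∧ G.dst e ∈ X).card

/-- The degree of a vertex (a loop contributes 2). -/
def degree [Fintype E] [DecidableEq V] (G : Multigraph V E) (v : V) : ℕ :=
  (Finset.univ.filter fun e => G.src e = v).card +
    (Finset.univ.filter fun e => G.dst e = v).card

/-- The set of neighbours of a vertex. -/
def neighborSet (G : Multigraph V E) (v : V) : Set V :=
  {w | ∃ e, (G.src e = v ∧ G.dst e = w) ∨ (G.src e = w ∧ G.dst e = v)}

/-- `(k,ℓ)`-sparsity: `i(X) ≤ k|X| − ℓ` for every `X ⊆ V` spanning at least one edge. -/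
def Sparse [Fintype E] [DecidableEq V] (G : Multigraph V E) (k l : ℤ) : Prop :=
  ∀ X : Finset V, (∃ e, G.src e ∈ X ∧ G.dst e ∈ X) →
    (G.iCount X : ℤ) ≤ k * (X.card : ℤ) - l

/-- `(k,ℓ)`-tightness: `(k,ℓ)`-sparse and `|E| = k|V| − ℓ`. -/
def Tight [Fintype V] [Fintype E] [DecidableEq V] (G : Multigraph V E) (k l : ℤ) : Prop :=
  G.Sparse k l ∧ (Fintype.card E : ℤ) = k * (Fintype.card V : ℤ) - l

/-- Delete a single edge. -/
def deleteEdge (G : Multigraph V E) (e₀ : E) : Multigraph V {e : E // e ≠ e₀} :=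
  ⟨fun e => G.src e.1, fun e => G.dst e.1⟩

/-- Delete a vertex together with all edges incident to it. -/
def deleteVertex (G : Multigraph V E) (v : V) :
    Multigraph {w : V // w ≠ v} {e : E // G.src e ≠ v ∧ G.dst e ≠ v} :=
  ⟨fun e => ⟨G.src e.1, e.2.1⟩, fun e => ⟨G.dst e.1, e.2.2⟩⟩

/-- Add one new edge with endpoints `u` and `w`. -/
def addEdge (G : Multigraph V E) (u w : V) : Multigraph V (E ⊕ Unit) :=
  ⟨Sum.elim G.src fun _ => u, Sum.elim G.dst fun _ => w⟩

/-- The subgraph induced by a set of vertices `X`. -/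
def induce (G : Multigraph V E) (X : Finset V) :
    Multigraph {v : V // v ∈ X} {e : E // G.src e ∈ X ∧ G.dst e ∈ X} :=
  ⟨fun e => ⟨G.src e.1, e.2.1⟩, fun e => ⟨G.dst e.1, e.2.2⟩⟩

/-- `G` is a `P(2,1)`-graph: `(2,1)`-tight and some edge-deleted graph is `(2,2)`-tight. -/
def IsP21 [Fintype V] [Fintype E] [DecidableEq V] [DecidableEq E] (G : Multigraph V E) : Prop :=
  G.Tight 2 1 ∧ ∃ e : E, (G.deleteEdge e).Tight 2 2

/-- `G` is a `(2,2)`-circuit: `|E| = 2|V| − 1` and every edge-deleted graph is `(2,2)`-tight. -/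
def IsCircuit22 [Fintype V] [Fintype E] [DecidableEq V] [DecidableEq E]
    (G : Multigraph V E) : Prop :=
  (Fintype.card E : ℤ) = 2 * (Fintype.card V : ℤ) - 1 ∧
    ∀ e : E, (G.deleteEdge e).Tight 2 2

/-- `X` is an over-critical set (`i(X) = 2|X| − 1`) of minimum cardinality. -/
def IsMinOverCritical [Fintype E] [DecidableEq V] (G : Multigraph V E) (X : Finset V) : Prop :=
  (G.iCount X : ℤ) = 2 * (X.card : ℤ) - 1 ∧
    ∀ Y : Finset V, (G.iCount Y : ℤ) = 2 * (Y.card : ℤ) - 1 → X.card ≤ Y.card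

/-- `G` is (a copy of) `K₂³`: two distinct vertices joined by three parallel edges. -/
def IsK23 [Fintype E] (G : Multigraph V E) : Prop :=
  ∃ a b : V, a ≠ b ∧ (∀ v : V, v = a ∨ v = b) ∧ Fintype.card E = 3 ∧
    ∀ e : E, (G.src e = a ∧ G.dst e = b) ∨ (G.src e = b ∧ G.dst e = a)

/-- Adjacency via an edge belonging to the edge subset `F`. -/
def AdjOn (G : Multigraph V E) (F : Set E) (u w : V) : Prop :=
  ∃ e ∈ F, (G.src e = u ∧ G.dst e = w) ∨ (G.src e = w ∧ G.dst e = u)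

/-- Connectivity of the multigraph. -/
def Connected (G : Multigraph V E) : Prop :=
  Nonempty V ∧ ∀ u w : V, Relation.ReflTransGen (G.AdjOn Set.univ) u w

/-- 2-edge-connectivity: connected, and still connected after deleting any one edge. -/
def TwoEdgeConnected (G : Multigraph V E) : Prop :=
  G.Connected ∧ ∀ e₀ : E, ∀ u w : V, Relation.ReflTransGen (G.AdjOn {e | e ≠ e₀}) u w

/-- Adjacency inside the induced subgraph on the vertex set `X`. -/
def AdjIn (G : Multigraph V E) (X : Set V) (u w : V) : Prop :=
  u ∈ X ∧ w ∈ X ∧ ∃ e, (G.src e = u ∧ G.dst e = w) ∨ (G.src e = w ∧ G.dst e = u)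

/-- Connectivity of the induced subgraph on the vertex set `X`. -/
def ConnectedOn (G : Multigraph V E) (X : Set V) : Prop :=
  ∀ u ∈ X, ∀ w ∈ X, Relation.ReflTransGen (G.AdjIn X) u w

/-- `T` is the edge set of a spanning tree of `G`:
the spanning subgraph with edge set `T` is connected and `|T| = |V| − 1`. -/
def IsSpanningTree [Fintype V] (G : Multigraph V E) (T : Finset E) : Prop :=
  (∀ u w : V, Relation.ReflTransGen (G.AdjOn (T : Set E)) u w) ∧ T.card + 1 = Fintype.card V

/-- `M` is the edge set of a spanning connected map-graph of `G`:
the spanning subgraph with edge set `M` is connected and has exactly `|V|` edges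
(equivalently, it is connected with exactly one cycle). -/
def IsConnectedSpanningMapGraph [Fintype V] (G : Multigraph V E) (M : Finset E) : Prop :=
  (∀ u w : V, Relation.ReflTransGen (G.AdjOn (M : Set E)) u w) ∧ M.card = Fintype.card V

/-- `(X, F)` describes a subgraph of `G`: every edge of `F` has both endpoints in `X`. -/
def IsSubgraphOn (G : Multigraph V E) (X : Finset V) (F : Finset E) : Prop :=
  ∀ e ∈ F, G.src e ∈ X ∧ G.dst e ∈ X

end Multigraph

/-!
Deleting one edge from a `(2,2)`-circuit leaves a `(2,2)`-sparse graph, so in the circuit every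
nonempty vertex set `X` spans at most `2|X| - 1` edges, and at most `2|X| - 2` if some edge
escapes it. Applied to `X = V - v`, this forces every vertex to meet at least three edges; as the
degrees sum to `2|E| = 4|V| - 2`, some vertex has degree exactly 3. Deleting such a vertex leaves
`2|V| - 4 = 2(|V| - 1) - 2` edges, and every vertex set of `G - v` misses the edges at `v`, so it
obeys the `(2,2)`-count.
-/

open Finset

namespace Multigraph

variable {V E : Type} [Fintype E] [DecidableEq V] (G : Multigraph V E)

lemma iCount_pos_iff (X : Finset V) : 0 < G.iCount X ↔ ∃ e, G.src e ∈ X ∧ G.dst e ∈ X := by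
  simp [iCount, card_pos, filter_nonempty_iff]

lemma iCount_mono {X Y : Finset V} (h : X ⊆ Y) : G.iCount X ≤ G.iCount Y :=
  card_le_card fun _ he => by
    simp only [mem_filter, mem_univ, true_and] at he ⊢
    exact ⟨h he.1, h he.2⟩

def incidentEdges (v : V) : Finset E :=
  univ.filter fun e => G.src e = v ∨ G.dst e = v

lemma card_incidentEdges_le_degree (v : V) : #(G.incidentEdges v) ≤ G.degree v := by
  classical
  rw [incidentEdges, filter_or]
  exact card_union_le _ _

lemma iCount_erase_add_card_incidentEdges [Fintype V] (v : V) :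
    G.iCount (univ.erase v) + #(G.incidentEdges v) = Fintype.card E := by
  rw [← card_univ, ← card_filter_add_card_filter_not (s := univ)
    (fun e => G.src e = v ∨ G.dst e = v), add_comm, incidentEdges, iCount]
  congr 2
  ext e
  simp

lemma sum_degree [Fintype V] : ∑ v, G.degree v = 2 * Fintype.card E := by
  simp only [degree, sum_add_distrib, ← card_eq_sum_card_fiberwise (fun e _ => mem_univ (G.src e)),
    ← card_eq_sum_card_fiberwise (fun e _ => mem_univ (G.dst e)), card_univ]
  ring

lemma iCount_deleteEdge [DecidableEq E] (e₀ : E) (X : Finset V) :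
    (G.deleteEdge e₀).iCount X = #((univ.filter fun e => G.src e ∈ X ∧ G.dst e ∈ X).erase e₀) := by
  rw [iCount, ← card_map (Function.Embedding.subtype _)]
  congr 1
  ext e
  simp only [mem_map, mem_filter, mem_univ, true_and, Function.Embedding.coe_subtype,
    Subtype.exists, exists_and_right, exists_eq_right, mem_erase]
  exact ⟨fun ⟨h, hm⟩ => ⟨h, hm⟩, fun ⟨h, hm⟩ => ⟨h, hm⟩⟩

lemma iCount_le_iCount_deleteEdge_add_one [DecidableEq E] (e₀ : E) (X : Finset V) :
    G.iCount X ≤ (G.deleteEdge e₀).iCount X + 1 := by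
  rw [iCount_deleteEdge, iCount]
  exact Nat.le_add_of_sub_le pred_card_le_card_erase

lemma iCount_deleteEdge_of_not_spans [DecidableEq E] {e₀ : E} {X : Finset V}
    (h : ¬(G.src e₀ ∈ X ∧ G.dst e₀ ∈ X)) : (G.deleteEdge e₀).iCount X = G.iCount X := by
  rw [iCount_deleteEdge, erase_eq_of_notMem (by simpa using h), iCount]

lemma iCount_deleteVertex (v : V) (X : Finset {w // w ≠ v}) :
    (G.deleteVertex v).iCount X = G.iCount (X.map (Function.Embedding.subtype _)) := by
  rw [iCount, iCount, ← card_map (Function.Embedding.subtype _)]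
  congr 1
  ext e
  simp only [mem_map, mem_filter, mem_univ, true_and, Function.Embedding.coe_subtype,
    Subtype.exists, exists_and_right, exists_eq_right]
  exact ⟨fun ⟨h, hs, hd⟩ => ⟨⟨h.1, hs⟩, ⟨h.2, hd⟩⟩, fun ⟨⟨h₁, hs⟩, ⟨h₂, hd⟩⟩ => ⟨⟨h₁, h₂⟩, hs, hd⟩⟩

lemma card_edges_deleteVertex [Fintype V] (v : V) :
    Fintype.card {e // G.src e ≠ v ∧ G.dst e ≠ v} = G.iCount (univ.erase v) := by
  rw [Fintype.card_subtype, iCount]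
  congr 1
  ext e
  simp

lemma Sparse.iCount_le {G : Multigraph V E} {k l : ℤ} (hG : G.Sparse k l) (hk : 0 ≤ k)
    (hlk : l ≤ k) {X : Finset V} (hX : X.Nonempty) : (G.iCount X : ℤ) ≤ k * #X - l := by
  rcases (G.iCount X).eq_zero_or_pos with h | h
  · have : (1 : ℤ) ≤ #X := by exact_mod_cast hX.card_pos
    rw [h]; push_cast; nlinarith
  · exact hG X ((G.iCount_pos_iff X).1 h)

namespace IsCircuit22

variable [Fintype V] [DecidableEq E] {G}

lemma iCount_le (hG : G.IsCircuit22) {X : Finset V} (hX : X.Nonempty) :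
    (G.iCount X : ℤ) ≤ 2 * #X - 1 := by
  obtain ⟨e⟩ : Nonempty E := by
    have : 0 < Fintype.card V := Fintype.card_pos_iff.2 ⟨hX.choose⟩
    rw [← Fintype.card_pos_iff]
    have := hG.1
    omega
  have := G.iCount_le_iCount_deleteEdge_add_one e X
  have := (hG.2 e).1.iCount_le (by norm_num) le_rfl hX
  omega

lemma iCount_le_of_lt_card (hG : G.IsCircuit22) {X : Finset V} (hX : X.Nonempty)
    (hlt : G.iCount X < Fintype.card E) : (G.iCount X : ℤ) ≤ 2 * #X - 2 := by
  obtain ⟨e, -, he⟩ := exists_mem_notMem_of_card_lt_card (t := univ) hlt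
  rw [← G.iCount_deleteEdge_of_not_spans (by simpa using he)]
  exact (hG.2 e).1.iCount_le (by norm_num) le_rfl hX

lemma three_le_card_incidentEdges (hG : G.IsCircuit22) (hV : 2 ≤ Fintype.card V) (v : V) :
    3 ≤ #(G.incidentEdges v) := by
  have hcard : #(univ.erase v) + 1 = Fintype.card V := card_erase_add_one (mem_univ v)
  have hX : (univ.erase v).Nonempty := by
    rw [← card_pos]; omega
  have hsum := G.iCount_erase_add_card_incidentEdges v
  have hE := hG.1
  have h₁ := hG.iCount_le hX
  have h₂ := hG.iCount_le_of_lt_card hX (by omega)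
  omega

lemma exists_degree_eq_three (hG : G.IsCircuit22) (hV : 2 ≤ Fintype.card V) :
    ∃ v, G.degree v = 3 := by
  by_contra! h
  have h4 (v : V) : 4 ≤ G.degree v :=
    lt_of_le_of_ne ((hG.three_le_card_incidentEdges hV v).trans
      (G.card_incidentEdges_le_degree v)) (h v).symm
  have hsum := card_nsmul_le_sum univ G.degree 4 fun v _ => h4 v
  rw [G.sum_degree, card_univ, smul_eq_mul] at hsum
  have := hG.1
  omega

lemma sparse_deleteVertex (hG : G.IsCircuit22) (hV : 2 ≤ Fintype.card V) (v : V) :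
    (G.deleteVertex v).Sparse 2 2 := by
  rintro X ⟨e, hs, -⟩
  rw [iCount_deleteVertex, ← card_map (Function.Embedding.subtype _)]
  refine hG.iCount_le_of_lt_card ⟨_, mem_map_of_mem _ hs⟩ ?_
  have hsub : X.map (Function.Embedding.subtype _) ⊆ univ.erase v := by
    intro w hw
    obtain ⟨w, -, rfl⟩ := mem_map.1 hw
    exact mem_erase.2 ⟨w.2, mem_univ _⟩
  have := G.iCount_mono hsub
  have := G.iCount_erase_add_card_incidentEdges v
  have := hG.three_le_card_incidentEdges hV v
  omega

lemma tight_deleteVertex (hG : G.IsCircuit22) (hV : 2 ≤ Fintype.card V) {v : V}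
    (hv : G.degree v = 3) : (G.deleteVertex v).Tight 2 2 := by
  refine ⟨hG.sparse_deleteVertex hV v, ?_⟩
  have hinc : #(G.incidentEdges v) = 3 :=
    le_antisymm (hv ▸ G.card_incidentEdges_le_degree v) (hG.three_le_card_incidentEdges hV v)
  have hsum := G.iCount_erase_add_card_incidentEdges v
  have hE := hG.1
  have hcard : Fintype.card {w // w ≠ v} + 1 = Fintype.card V := by
    rw [Fintype.card_subtype_compl, Fintype.card_subtype_eq]
    omega
  rw [card_edges_deleteVertex]
  omega

end IsCircuit22

end Multigraph

/-- A `(2,2)`-circuit with at least two vertices contains a vertex of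
degree 3, and deleting any degree-3 vertex yields a `(2,2)`-tight graph. -/
theorem statement_11 {V E : Type} [Fintype V] [Fintype E] [DecidableEq V] [DecidableEq E]
    (G : Multigraph V E) (hG : G.IsCircuit22) (hV : 2 ≤ Fintype.card V) :
    (∃ v : V, G.degree v = 3) ∧
      ∀ v : V, G.degree v = 3 → (G.deleteVertex v).Tight 2 2 :=
  ⟨hG.exists_degree_eq_three hV, fun _ hv => hG.tight_deleteVertex hV hv⟩
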